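/- arXiv:2104.04758 — 3 statements merged into one kernel-verified Lean document; each statement's English description precedes it below -/
import Mathlib

section
/- Let T = (V, E) be an undirected tree whose vertex set is {1, 2, ..., n}. For any i, j ∈ {1, ..., n} with i < j, every vertex that lies on the (unique) path from i to j in T also lies on the path from k to k+1 for some k with i ≤ k ≤ j−1. -/
/-- In a tree on vertices `{0, …, n-1}`, every vertex lying on the path from
`i` to `j` (with `i < j`) lies on the path from `k` to `k+1` for some
`i ≤ k ≤ j-1`. -/
theorem stmt_0 (n : ℕ) (G : SimpleGraph (Fin n)) (hG : G.IsTree)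
    (i j : Fin n) (hij : i < j) (p : G.Path i j) (v : Fin n)
    (hv : v ∈ p.1.support) :
    ∃ k k' : Fin n, i ≤ k ∧ (k' : ℕ) = (k : ℕ) + 1 ∧ k' ≤ j ∧
      ∃ q : G.Path k k', v ∈ q.1.support := by
  classical
  -- canonical path between any two vertices
  have hconn := hG.isConnected
  have pa : ∀ a b : Fin n, G.Path a b := fun a b =>
    (Classical.choice (hconn.preconnected a b)).toPath
  -- uniqueness of paths
  have huniq : ∀ (a b : Fin n) (q q' : G.Path a b), q.1 = q'.1 := by
    intro a b q q'
    obtain ⟨w, -, hw⟩ := hG.existsUnique_path a b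
    rw [hw q.1 q.2, hw q'.1 q'.2]
  -- path support splits along an intermediate vertex
  have key : ∀ (a b c : Fin n) (q : G.Path a c),
      ∀ x ∈ q.1.support, x ∈ (pa a b).1.support ∨ x ∈ (pa b c).1.support := by
    intro a b c q x hx
    have hb : q.1 = ((pa a b).1.append (pa b c).1).bypass :=
      huniq a c q ⟨_, SimpleGraph.Walk.bypass_isPath _⟩
    rw [hb] at hx
    have hx' := SimpleGraph.Walk.support_bypass_subset _ hx
    exact (SimpleGraph.Walk.mem_support_append_iff _ _).1 hx'
  -- main induction
  have main : ∀ (m : ℕ) (k : Fin n), i ≤ k → (k : ℕ) + m = (j : ℕ) → 1 ≤ m →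
      ∀ q : G.Path k j, v ∈ q.1.support →
      ∃ k k' : Fin n, i ≤ k ∧ (k' : ℕ) = (k : ℕ) + 1 ∧ k' ≤ j ∧
        ∃ q : G.Path k k', v ∈ q.1.support := by
    intro m
    induction m with
    | zero => intro k _ _ h1; omega
    | succ m ih =>
      intro k hik hkm _ q hq
      have hk1 : (k : ℕ) + 1 < n := by have := j.isLt; omega
      set k' : Fin n := ⟨(k : ℕ) + 1, hk1⟩ with hk'
      by_cases hc : v ∈ (pa k k').1.support
      · exact ⟨k, k', hik, rfl, by rw [Fin.le_def]; simp [hk']; omega, pa k k', hc⟩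
      · have hv' : v ∈ (pa k' j).1.support := by
          rcases key k k' j q v hq with h | h
          · exact absurd h hc
          · exact h
        rcases Nat.eq_zero_or_pos m with hm | hm
        · -- k' = j, so path from j to j is nil, hence v = j
          have hkj : k' = j := by apply Fin.ext; simp [hk']; omega
          subst hkj
          have hnil : (pa k' k').1 = SimpleGraph.Walk.nil :=
            huniq k' k' (pa k' k') ⟨SimpleGraph.Walk.nil, SimpleGraph.Walk.IsPath.nil⟩
          rw [hnil] at hv'
          simp [SimpleGraph.Walk.support_nil] at hv'
          subst hv'
          exact absurd (SimpleGraph.Walk.end_mem_support _) hc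
        · have hik' : i ≤ k' := by
            rw [Fin.le_def] at hik ⊢; simp [hk']; omega
          exact ih k' hik' (by simp [hk']; omega) hm (pa k' j) hv'
  have hij' : (i : ℕ) < (j : ℕ) := hij
  exact main ((j : ℕ) - (i : ℕ)) i le_rfl (by omega) (by omega) p hv
end

section
/- Let w be a word of length n over alphabet Σ, and for indices 1 ≤ i, j ≤ n+1 let LCP(i, j) denote the length of the longest common prefix of the suffixes of w starting at positions i and j. Let ⟨i,j⟩, ⟨i₁,j₁⟩, ⟨i₂,j₂⟩ be spans of w (pairs ⟨a,b⟩ with 1 ≤ a ≤ b ≤ n+1, defining the factor at positions a through b−1). Then w⟨i,j⟩ = w⟨i₁,j₁⟩ · w⟨i₂,j₂⟩ if and only if (j − i) = (j₁ − i₁) + (j₂ − i₂), LCP(i, i₁) ≥ j₁ − i₁, and LCP(i + (j₁ − i₁), i₂) ≥ j₂ − i₂. -/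
/-- Length of the longest common prefix of two words. -/
def lcpLen {α : Type*} [DecidableEq α] : List α → List α → ℕ
  | a :: as, b :: bs => if a = b then lcpLen as bs + 1 else 0
  | _, _ => 0

lemma lcpLen_le_left {α : Type*} [DecidableEq α] : ∀ (u v : List α), lcpLen u v ≤ u.length
  | [], _ => by simp [lcpLen]
  | _ :: _, [] => by simp [lcpLen]
  | a :: as, b :: bs => by
    by_cases h : a = b <;> simp [lcpLen, h]
    exact lcpLen_le_left as bs

lemma lcpLen_le_right {α : Type*} [DecidableEq α] : ∀ (u v : List α), lcpLen u v ≤ v.length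
  | [], _ => by simp [lcpLen]
  | _ :: _, [] => by simp [lcpLen]
  | a :: as, b :: bs => by
    by_cases h : a = b <;> simp [lcpLen, h]
    exact lcpLen_le_right as bs

lemma le_lcpLen_iff {α : Type*} [DecidableEq α] :
    ∀ (u v : List α) (k : ℕ), k ≤ u.length → k ≤ v.length →
      (k ≤ lcpLen u v ↔ u.take k = v.take k)
  | _, _, 0, _, _ => by simp
  | [], _, k + 1, hu, _ => by simp at hu
  | _ :: _, [], k + 1, _, hv => by simp at hv
  | a :: as, b :: bs, k + 1, hu, hv => by
    by_cases h : a = b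
    · subst h
      have ih := le_lcpLen_iff as bs k (by simpa using hu) (by simpa using hv)
      simp only [lcpLen, if_true, eq_self_iff_true, List.take_succ_cons, List.cons.injEq,
        true_and, Nat.add_le_add_iff_right]
      exact ih
    · simp [lcpLen, h]

/-- `w⟨a,b⟩`: the factor of `w` given by the (1-indexed) span `⟨a, b⟩`. -/
def spanFactor {α : Type*} (w : List α) (a b : ℕ) : List α :=
  (w.drop (a - 1)).take (b - a)

lemma spanFactor_length {α : Type*} (w : List α) (a b : ℕ)
    (h1 : 1 ≤ a) (h2 : a ≤ b) (h3 : b ≤ w.length + 1) :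
    (spanFactor w a b).length = b - a := by
  simp [spanFactor]
  omega

/-- Characterization of `w⟨i,j⟩ = w⟨i₁,j₁⟩ · w⟨i₂,j₂⟩` via lengths and
longest common prefixes of suffixes. -/
theorem stmt_6 (Sigma : Type*) [DecidableEq Sigma] (w : List Sigma)
    (i j i₁ j₁ i₂ j₂ : ℕ)
    (h1 : 1 ≤ i) (h2 : i ≤ j) (h3 : j ≤ w.length + 1)
    (h1' : 1 ≤ i₁) (h2' : i₁ ≤ j₁) (h3' : j₁ ≤ w.length + 1)
    (h1'' : 1 ≤ i₂) (h2'' : i₂ ≤ j₂) (h3'' : j₂ ≤ w.length + 1) :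
    spanFactor w i j = spanFactor w i₁ j₁ ++ spanFactor w i₂ j₂ ↔
      (j - i = (j₁ - i₁) + (j₂ - i₂) ∧
       j₁ - i₁ ≤ lcpLen (w.drop (i - 1)) (w.drop (i₁ - 1)) ∧
       j₂ - i₂ ≤ lcpLen (w.drop (i + (j₁ - i₁) - 1)) (w.drop (i₂ - 1))) := by
  set d := j - i with hd
  set d1 := j₁ - i₁ with hd1
  set d2 := j₂ - i₂ with hd2
  have hlen : (w.drop (i - 1)).length = w.length + 1 - i := by simp; omega
  have hlen1 : (w.drop (i₁ - 1)).length = w.length + 1 - i₁ := by simp; omega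
  have hlen2 : (w.drop (i₂ - 1)).length = w.length + 1 - i₂ := by simp; omega
  have hlen' : (w.drop (i + d1 - 1)).length = w.length - (i + d1 - 1) := by simp
  have key1 : ∀ (_ : d1 ≤ d),
      (d1 ≤ lcpLen (w.drop (i - 1)) (w.drop (i₁ - 1)) ↔
        (w.drop (i - 1)).take d1 = (w.drop (i₁ - 1)).take d1) := fun hle =>
    le_lcpLen_iff _ _ _ (by omega) (by omega)
  have key2 : ∀ (_ : d1 + d2 ≤ d),
      (d2 ≤ lcpLen (w.drop (i + d1 - 1)) (w.drop (i₂ - 1)) ↔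
        (w.drop (i + d1 - 1)).take d2 = (w.drop (i₂ - 1)).take d2) := fun hle =>
    le_lcpLen_iff _ _ _ (by omega) (by omega)
  have hdrop : w.drop (i + d1 - 1) = (w.drop (i - 1)).drop d1 := by
    rw [List.drop_drop]; congr 1; omega
  have hA : (spanFactor w i₁ j₁).length = d1 := spanFactor_length w i₁ j₁ h1' h2' h3'
  constructor
  · intro h
    have hlens : d = d1 + d2 := by
      have := congrArg List.length h
      rw [spanFactor_length w i j h1 h2 h3, List.length_append, hA,
        spanFactor_length w i₂ j₂ h1'' h2'' h3''] at this
      exact this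
    refine ⟨hlens, ?_, ?_⟩
    · rw [key1 (by omega)]
      have := congrArg (List.take d1) h
      rw [List.take_left' hA] at this
      simp only [spanFactor, List.take_take] at this
      rwa [min_eq_left (show d1 ≤ j - i by omega)] at this
    · rw [key2 (by omega)]
      have := congrArg (List.drop d1) h
      rw [List.drop_left' hA] at this
      simp only [spanFactor, List.drop_take] at this
      rw [hdrop]
      rw [show d - d1 = d2 by omega] at this
      exact this
  · rintro ⟨hlens, hl1, hl2⟩
    rw [key1 (by omega)] at hl1
    rw [key2 (by omega)] at hl2
    unfold spanFactor
    rw [← List.take_append_drop d1 ((w.drop (i - 1)).take (j - i)),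
      List.take_take, min_eq_left (show d1 ≤ j - i by omega), List.drop_take, List.drop_drop,
      show i - 1 + d1 = i + d1 - 1 by omega, show j - i - d1 = d2 by omega, hl1, hl2]
end

section
/- Let α ∈ Ξ⁺ be a pattern over variables and suppose α = yⁱ · β · yʲ for some variable y ∈ Ξ, integers i, j ≥ 0, and a pattern β containing no occurrence of y. Consider the bracketing α̃ obtained by first taking any bracketing β̃ of β, then repeatedly prepending y (left-concatenating i times) and then repeatedly appending y (right-concatenating j times). Then in the full binary tree corresponding to α̃, the set of internal nodes having a child labeled y forms a connected path from the root, i.e., every internal node on the path between any two y-parents is itself a y-parent. -/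
/-- Full binary trees with leaves labeled in `X`: bracketings of patterns. -/
inductive BTree (X : Type*) : Type _
  | leaf : X → BTree X
  | node : BTree X → BTree X → BTree X

/-- The leaves of a bracketing, read from left to right. -/
def BTree.leaves {X : Type*} : BTree X → List X
  | BTree.leaf a => [a]
  | BTree.node l r => BTree.leaves l ++ BTree.leaves r

/-- The subtree of `t` at position `p` (a list of directions; `false` = go to
the left child, `true` = go to the right child), if it exists. -/
def BTree.sub {X : Type*} : BTree X → List Bool → Option (BTree X)
  | t, [] => some t
  | BTree.node l r, b :: p => BTree.sub (if b then r else l) p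
  | BTree.leaf _, _ :: _ => none

/-- Position `p` is an internal node of `t`. -/
def BTree.isInternal {X : Type*} (t : BTree X) (p : List Bool) : Prop :=
  ∃ l r, t.sub p = some (BTree.node l r)

/-- Position `p` is a `y`-parent of `t`: an internal node one of whose
children is the leaf `y`. -/
def BTree.isYParent {X : Type*} (y : X) (t : BTree X) (p : List Bool) : Prop :=
  ∃ l r, t.sub p = some (BTree.node l r) ∧
    (l = BTree.leaf y ∨ r = BTree.leaf y)

/-- Left-concatenate the leaf `y` onto a bracketing `i` times. -/
def prependY {X : Type*} (y : X) : ℕ → BTree X → BTree X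
  | 0, t => t
  | i + 1, t => BTree.node (BTree.leaf y) (prependY y i t)

/-- Right-concatenate the leaf `y` onto a bracketing `j` times. -/
def appendY {X : Type*} (y : X) : ℕ → BTree X → BTree X
  | 0, t => t
  | j + 1, t => BTree.node (appendY y j t) (BTree.leaf y)

lemma mem_leaves_sub {X : Type*} : ∀ (p : List Bool) (t s : BTree X),
    t.sub p = some s → ∀ x, x ∈ s.leaves → x ∈ t.leaves
  | [], t, s, h => by
      simp [BTree.sub] at h; subst h; exact fun _ h => h
  | b :: p, BTree.leaf a, s, h => by simp [BTree.sub] at h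
  | b :: p, BTree.node l r, s, h => by
      intro x hx
      cases b with
      | false =>
          simp [BTree.sub] at h
          exact List.mem_append.2 (Or.inl (mem_leaves_sub p l s h x hx))
      | true =>
          simp [BTree.sub] at h
          exact List.mem_append.2 (Or.inr (mem_leaves_sub p r s h x hx))

lemma no_yparent {X : Type*} (y : X) (t : BTree X) (h : y ∉ t.leaves)
    (p : List Bool) : ¬ t.isYParent y p := by
  rintro ⟨l, r, hs, hlr⟩
  apply h
  apply mem_leaves_sub p t _ hs
  rcases hlr with h' | h' <;> subst h' <;> simp [BTree.leaves]

lemma yparent_prepend {X : Type*} (y : X) (βt : BTree X) (hy : y ∉ βt.leaves) :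
    ∀ (i : ℕ) (p : List Bool),
      (prependY y i βt).isYParent y p ↔ ∃ b, b < i ∧ p = List.replicate b true
  | 0, p => by
      simp only [prependY]
      constructor
      · exact fun h => absurd h (no_yparent y βt hy p)
      · rintro ⟨b, hb, -⟩; omega
  | i + 1, p => by
      cases p with
      | nil =>
          constructor
          · intro _; exact ⟨0, by omega, rfl⟩
          · intro _; exact ⟨BTree.leaf y, prependY y i βt, rfl, Or.inl rfl⟩
      | cons b p' =>
          cases b with
          | false =>
              constructor
              · rintro ⟨l, r, hs, -⟩
                simp only [prependY, BTree.sub, if_neg Bool.false_ne_true] at hs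
                cases p' with
                | nil => simp [BTree.sub] at hs
                | cons c p'' => simp [BTree.sub] at hs
              · rintro ⟨b, hb, hp⟩
                cases b with
                | zero => simp at hp
                | succ b => simp [List.replicate_succ] at hp
          | true =>
              have key : ∀ s, (prependY y (i+1) βt).sub (true :: p') = some s ↔
                  (prependY y i βt).sub p' = some s := by
                intro s; simp [prependY, BTree.sub]
              constructor
              · rintro ⟨l, r, hs, hlr⟩
                obtain ⟨b, hb, hp⟩ := (yparent_prepend y βt hy i p').1
                  ⟨l, r, (key _).1 hs, hlr⟩
                exact ⟨b + 1, by omega, by simp [List.replicate_succ, hp]⟩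
              · rintro ⟨b, hb, hp⟩
                cases b with
                | zero => simp at hp
                | succ b =>
                    simp [List.replicate_succ] at hp
                    obtain ⟨l, r, hs, hlr⟩ := (yparent_prepend y βt hy i p').2
                      ⟨b, by omega, hp⟩
                    exact ⟨l, r, (key _).2 hs, hlr⟩

lemma yparent_append {X : Type*} (y : X) (T : BTree X) :
    ∀ (j : ℕ) (p : List Bool),
      (appendY y j T).isYParent y p ↔
        (∃ a, a < j ∧ p = List.replicate a false) ∨
        (∃ p', p = List.replicate j false ++ p' ∧ T.isYParent y p')
  | 0, p => by
      simp [appendY]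
  | j + 1, p => by
      cases p with
      | nil =>
          constructor
          · intro _; exact Or.inl ⟨0, by omega, rfl⟩
          · intro _; exact ⟨appendY y j T, BTree.leaf y, rfl, Or.inr rfl⟩
      | cons b p' =>
          cases b with
          | true =>
              constructor
              · rintro ⟨l, r, hs, -⟩
                simp only [appendY, BTree.sub, if_pos rfl] at hs
                cases p' with
                | nil => simp [BTree.sub] at hs
                | cons c p'' => simp [BTree.sub] at hs
              · rintro (⟨a, ha, hp⟩ | ⟨p'', hp, -⟩)
                · cases a with
                  | zero => simp at hp
                  | succ a => simp [List.replicate_succ] at hp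
                · simp [List.replicate_succ] at hp
          | false =>
              have key : ∀ s, (appendY y (j+1) T).sub (false :: p') = some s ↔
                  (appendY y j T).sub p' = some s := by
                intro s; simp [appendY, BTree.sub]
              constructor
              · rintro ⟨l, r, hs, hlr⟩
                rcases (yparent_append y T j p').1 ⟨l, r, (key _).1 hs, hlr⟩ with
                  ⟨a, ha, hp⟩ | ⟨p'', hp, hyp⟩
                · exact Or.inl ⟨a + 1, by omega, by simp [List.replicate_succ, hp]⟩
                · exact Or.inr ⟨p'', by simp [List.replicate_succ, hp], hyp⟩
              · rintro (⟨a, ha, hp⟩ | ⟨p'', hp, hyp⟩)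
                · cases a with
                  | zero => simp at hp
                  | succ a =>
                      simp [List.replicate_succ] at hp
                      obtain ⟨l, r, hs, hlr⟩ :=
                        (yparent_append y T j p').2 (Or.inl ⟨a, by omega, hp⟩)
                      exact ⟨l, r, (key _).2 hs, hlr⟩
                · simp [List.replicate_succ] at hp
                  obtain ⟨l, r, hs, hlr⟩ :=
                    (yparent_append y T j p').2 (Or.inr ⟨p'', hp, hyp⟩)
                  exact ⟨l, r, (key _).2 hs, hlr⟩

lemma yparent_char {X : Type*} (y : X) (i j : ℕ) (βt : BTree X)
    (hy : y ∉ βt.leaves) (p : List Bool) :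
    (appendY y j (prependY y i βt)).isYParent y p ↔
      (p <+: (List.replicate j false ++ List.replicate i true) ∧
        p.length < j + i) := by
  rw [yparent_append]
  constructor
  · rintro (⟨a, ha, hp⟩ | ⟨p', hp, hyp⟩)
    · subst hp
      refine ⟨⟨List.replicate (j - a) false ++ List.replicate i true, ?_⟩, ?_⟩
      · rw [← List.append_assoc, ← List.replicate_add]
        congr 2; omega
      · simp; omega
    · obtain ⟨b, hb, hp'⟩ := (yparent_prepend y βt hy i p').1 hyp
      subst hp'; subst hp
      refine ⟨⟨List.replicate (i - b) true, ?_⟩, ?_⟩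
      · rw [List.append_assoc, ← List.replicate_add]
        congr 2; omega
      · simp; omega
  · rintro ⟨hpre, hlen⟩
    have hp : p = (List.replicate j false ++ List.replicate i true).take p.length := by
      rw [List.prefix_iff_eq_take] at hpre; exact hpre
    rw [List.take_append, List.take_replicate, List.take_replicate,
      List.length_replicate] at hp
    rcases lt_or_ge p.length j with h | h
    · left
      refine ⟨p.length, h, ?_⟩
      rw [hp, Nat.min_eq_left h.le, Nat.sub_eq_zero_of_le h.le]
      simp
    · right
      refine ⟨List.replicate (p.length - j) true, ?_, ?_⟩
      · conv_lhs => rw [hp]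
        rw [Nat.min_eq_right h, Nat.min_eq_left (by omega : p.length - j ≤ i)]
      · exact (yparent_prepend y βt hy i _).2 ⟨p.length - j, by omega, rfl⟩

/-- For the bracketing of `yⁱ · β · yʲ` obtained by first prepending `y`
`i` times to a bracketing of `β` (which contains no `y`) and then appending
`y` `j` times, the `y`-parents form a connected path from the root: any two
`y`-parents are comparable (one lies above the other), and every internal
node on the path between two `y`-parents is itself a `y`-parent. -/
theorem stmt_15 (X : Type*) (y : X) (i j : ℕ) (β : List X) (βt : BTree X)
    (hβ : βt.leaves = β) (hy : y ∉ β)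
    (t : BTree X) (ht : t = appendY y j (prependY y i βt)) :
    (∀ p q : List Bool, t.isYParent y p → t.isYParent y q →
        p <+: q ∨ q <+: p) ∧
    (∀ p q r : List Bool, t.isYParent y p → t.isYParent y q →
        p <+: r → r <+: q → t.isInternal r → t.isYParent y r) := by
  subst ht
  have hy' : y ∉ βt.leaves := hβ ▸ hy
  constructor
  · intro p q hp hq
    rw [yparent_char y i j βt hy'] at hp hq
    exact List.prefix_or_prefix_of_prefix hp.1 hq.1
  · intro p q r hp hq hpr hrq hint
    rw [yparent_char y i j βt hy'] at hq ⊢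
    exact ⟨hrq.trans hq.1, lt_of_le_of_lt hrq.length_le hq.2⟩
end
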